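/- Let X ≠ 0 with 𝒜(X) = b, and let α(X) = ‖X‖_{k,2}^⋆ / ‖X‖_F². Then X/‖X‖_{k,2}^⋆ maximizes ⟨X/‖X‖_{k,2}^⋆, Z⟩ over the set { (Z, z) : ‖Z‖_{k,2}^⋆ ≤ 1, 𝒜(Z) = z·b, z > 0 } (attained at Z = X/‖X‖_{k,2}^⋆, z = 1/‖X‖_{k,2}^⋆) if and only if Y = 0 minimizes Y ↦ ‖X + Y‖_{k,2}^⋆ − α(X)·⟨X, Y⟩ over { Y : 𝒜(Y) = 0 }. -/

import Mathlib

/-!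
Both sides say that the linear functional `ℓ = (d / ‖X‖_F²) ⟨X, ·⟩`, with `d = ‖X‖_{k,2}^⋆`, is
dominated by the dual norm on the affine fibre `{W : 𝒜 W = b}`. Since `ℓ X = d`, the minimality
of `Y = 0` is this domination with `W = X + Y`. By positive homogeneity of the dual norm, the
maximization over the cone `{Z : 𝒜 Z ∈ ℝ_{>0} b}` is the same domination after rescaling `W`
to `W / ‖W‖_{k,2}^⋆`; here `b ≠ 0` keeps `W` away from `0`, where the rescaling breaks down.
-/

open Matrix

/-- Singular values of a real `m × n` matrix, sorted in decreasing order
(indexed by `Fin n`; `σ i = sqrt` of the `i`-th largest eigenvalue of `Aᵀ * A`). -/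
noncomputable def svalsDesc {m n : ℕ} (A : Matrix (Fin m) (Fin n) ℝ) : Fin n → ℝ :=
  fun i =>
    Real.sqrt
      (((Matrix.isHermitian_conjTranspose_mul_self A).eigenvalues ∘
        Tuple.sort (Matrix.isHermitian_conjTranspose_mul_self A).eigenvalues) i.rev)

/-- Ky Fan 2-k-norm: `(∑_{i=1}^k σ_i(A)²)^{1/2}`. -/
noncomputable def kyFan2 {m n : ℕ} (k : ℕ) (A : Matrix (Fin m) (Fin n) ℝ) : ℝ :=
  Real.sqrt (∑ i ∈ Finset.univ.filter (fun i : Fin n => (i : ℕ) < k), (svalsDesc A i) ^ 2)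

/-- Frobenius inner product `⟨A, B⟩ = trace (Aᵀ B)`. -/
noncomputable def frobInner {m n : ℕ} (A B : Matrix (Fin m) (Fin n) ℝ) : ℝ :=
  ∑ i, ∑ j, A i j * B i j

/-- Frobenius norm. -/
noncomputable def frobNorm {m n : ℕ} (A : Matrix (Fin m) (Fin n) ℝ) : ℝ :=
  Real.sqrt (∑ i, ∑ j, (A i j) ^ 2)

/-- Dual Ky Fan 2-k-norm `‖A‖_{k,2}^⋆ = max {⟨A,X⟩ : ‖X‖_{k,2} ≤ 1}`. -/
noncomputable def kyFan2Dual {m n : ℕ} (k : ℕ) (A : Matrix (Fin m) (Fin n) ℝ) : ℝ :=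
  sSup {c : ℝ | ∃ X : Matrix (Fin m) (Fin n) ℝ, kyFan2 k X ≤ 1 ∧ c = frobInner A X}

/-- The linear map `𝒜` satisfies the restricted isometry inequality with constant `δ`
for all matrices of rank at most `r`. -/
def HasRIP {m n p : ℕ} (𝒜 : Matrix (Fin m) (Fin n) ℝ →ₗ[ℝ] EuclideanSpace ℝ (Fin p))
    (r : ℕ) (δ : ℝ) : Prop :=
  ∀ X : Matrix (Fin m) (Fin n) ℝ, X.rank ≤ r →
    (1 - δ) * frobNorm X ≤ ‖𝒜 X‖ ∧ ‖𝒜 X‖ ≤ (1 + δ) * frobNorm X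

section HomogeneousDomination

variable {V U : Type*} [AddCommGroup V] [Module ℝ V] [AddCommGroup U] [Module ℝ U]
  (A : V →ₗ[ℝ] U) {N : V → ℝ} (ℓ : V →ₗ[ℝ] ℝ)

theorem forall_ker_le_sub_iff_forall_fiber_le {x : V} (hx : ℓ x = N x) :
    (∀ y, A y = 0 → N x ≤ N (x + y) - ℓ y) ↔ ∀ w, A w = A x → ℓ w ≤ N w := by
  constructor
  · intro h w hw
    have hxw := h (w - x) (by rw [map_sub, hw, sub_self])
    rw [add_sub_cancel, map_sub, hx] at hxw
    linarith
  · intro h y hy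
    have hxy := h (x + y) (by rw [map_add, hy, add_zero])
    rw [map_add, hx] at hxy
    linarith

theorem forall_cone_le_one_iff_forall_fiber_le
    (hN : ∀ c : ℝ, 0 < c → ∀ v, N (c • v) = c * N v) (hpos : ∀ v ≠ 0, 0 < N v)
    {b : U} (hb : b ≠ 0) :
    (∀ (v : V) (z : ℝ), N v ≤ 1 → A v = z • b → 0 < z → ℓ v ≤ 1) ↔
      ∀ w, A w = b → ℓ w ≤ N w := by
  constructor
  · intro h w hw
    have hNw : 0 < N w := hpos w (by rintro rfl; exact hb (by rw [← hw, map_zero]))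
    have hunit := h ((N w)⁻¹ • w) (N w)⁻¹
      (by rw [hN _ (inv_pos.2 hNw), inv_mul_cancel₀ hNw.ne']) (by rw [map_smul, hw])
      (inv_pos.2 hNw)
    rwa [map_smul, smul_eq_mul, inv_mul_le_iff₀ hNw, mul_one] at hunit
  · intro h v z hv hAv hz
    have hscaled := h (z⁻¹ • v)
      (by rw [map_smul, hAv, smul_smul, inv_mul_cancel₀ hz.ne', one_smul])
    rw [map_smul, hN _ (inv_pos.2 hz), smul_eq_mul] at hscaled
    exact (le_of_mul_le_mul_left hscaled (inv_pos.2 hz)).trans hv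

end HomogeneousDomination

section Frobenius

variable {m n : ℕ}

theorem frobInner_smul_left (c : ℝ) (A B : Matrix (Fin m) (Fin n) ℝ) :
    frobInner (c • A) B = c * frobInner A B := by
  simp only [frobInner, Matrix.smul_apply, smul_eq_mul, Finset.mul_sum, mul_assoc]

noncomputable def frobInnerₗ (A : Matrix (Fin m) (Fin n) ℝ) :
    Matrix (Fin m) (Fin n) ℝ →ₗ[ℝ] ℝ where
  toFun := frobInner A
  map_add' B C := by
    simp only [frobInner, Matrix.add_apply, mul_add, Finset.sum_add_distrib]
  map_smul' c B := by
    simp only [frobInner, Matrix.smul_apply, smul_eq_mul, RingHom.id_apply, Finset.mul_sum,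
      mul_left_comm]

@[simp]
theorem frobInnerₗ_apply (A B : Matrix (Fin m) (Fin n) ℝ) : frobInnerₗ A B = frobInner A B :=
  rfl

theorem frobNorm_sq (A : Matrix (Fin m) (Fin n) ℝ) : frobNorm A ^ 2 = ∑ i, ∑ j, A i j ^ 2 :=
  Real.sq_sqrt (by positivity)

theorem frobInner_self (A : Matrix (Fin m) (Fin n) ℝ) : frobInner A A = frobNorm A ^ 2 := by
  rw [frobInner, frobNorm_sq]
  simp only [sq]

theorem frobNorm_smul (c : ℝ) (A : Matrix (Fin m) (Fin n) ℝ) :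
    frobNorm (c • A) = |c| * frobNorm A := by
  rw [frobNorm, frobNorm, ← Real.sqrt_sq_eq_abs, ← Real.sqrt_mul (sq_nonneg c)]
  simp only [Matrix.smul_apply, smul_eq_mul, mul_pow, Finset.mul_sum]

theorem frobNorm_pos {A : Matrix (Fin m) (Fin n) ℝ} (hA : A ≠ 0) : 0 < frobNorm A := by
  obtain ⟨i, j, hij⟩ : ∃ i j, A i j ≠ 0 := by
    by_contra! h
    exact hA (Matrix.ext h)
  refine Real.sqrt_pos.2 (Finset.sum_pos' (fun _ _ => by positivity) ⟨i, Finset.mem_univ _, ?_⟩)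
  exact Finset.sum_pos' (fun _ _ => by positivity) ⟨j, Finset.mem_univ _, by positivity⟩

theorem frobInner_le_frobNorm_mul (A B : Matrix (Fin m) (Fin n) ℝ) :
    frobInner A B ≤ frobNorm A * frobNorm B := by
  have h := Real.sum_mul_le_sqrt_mul_sqrt Finset.univ
    (fun p : Fin m × Fin n => A p.1 p.2) (fun p : Fin m × Fin n => B p.1 p.2)
  rwa [← Finset.univ_product_univ, Finset.sum_product, Finset.sum_product,
    Finset.sum_product] at h

end Frobenius

section KyFan

variable {m n : ℕ} {k : ℕ}

theorem svalsDesc_nonneg (A : Matrix (Fin m) (Fin n) ℝ) (i : Fin n) : 0 ≤ svalsDesc A i :=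
  Real.sqrt_nonneg _

theorem svalsDesc_antitone (A : Matrix (Fin m) (Fin n) ℝ) : Antitone (svalsDesc A) :=
  fun _ _ hij => Real.sqrt_le_sqrt (Tuple.monotone_sort _ (Fin.rev_le_rev.mpr hij))

theorem sum_sq_svalsDesc (A : Matrix (Fin m) (Fin n) ℝ) :
    ∑ i, svalsDesc A i ^ 2 = ∑ i, ∑ j, A i j ^ 2 := by
  set hH := isHermitian_conjTranspose_mul_self A
  calc ∑ i, svalsDesc A i ^ 2
      = ∑ i, (hH.eigenvalues ∘ Tuple.sort hH.eigenvalues) i.rev :=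
        Finset.sum_congr rfl fun i _ => by
          exact Real.sq_sqrt (eigenvalues_conjTranspose_mul_self_nonneg A _)
    _ = ∑ i, (hH.eigenvalues ∘ Tuple.sort hH.eigenvalues) i :=
        Fintype.sum_equiv Fin.revPerm _ _ fun _ => rfl
    _ = ∑ i, hH.eigenvalues i := Equiv.sum_comp (Tuple.sort hH.eigenvalues) hH.eigenvalues
    _ = trace (Aᴴ * A) := by
        conv_rhs => rw [hH.spectral_theorem]
        rw [Unitary.conjStarAlgAut_apply, trace_mul_cycle, Unitary.coe_star_mul_self, one_mul,
          trace_diagonal]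
        simp
    _ = ∑ i, ∑ j, A i j ^ 2 := by
        rw [trace, Finset.sum_comm]
        simp [diag, mul_apply, sq]

theorem kyFan2_le_frobNorm (k : ℕ) (A : Matrix (Fin m) (Fin n) ℝ) : kyFan2 k A ≤ frobNorm A := by
  refine Real.sqrt_le_sqrt ?_
  rw [← sum_sq_svalsDesc]
  exact Finset.sum_le_sum_of_subset_of_nonneg (Finset.filter_subset _ _)
    fun i _ _ => sq_nonneg _

/-- Every singular value is at most the largest one, which is at most `‖A‖_{k,2}` once `1 ≤ k`. -/
theorem frobNorm_le_sqrt_mul_kyFan2 (hk : 1 ≤ k) (A : Matrix (Fin m) (Fin n) ℝ) :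
    frobNorm A ≤ √n * kyFan2 k A := by
  rw [frobNorm, kyFan2, ← Real.sqrt_mul n.cast_nonneg]
  refine Real.sqrt_le_sqrt ?_
  rw [← sum_sq_svalsDesc]
  set S := ∑ i ∈ Finset.univ.filter (fun i : Fin n => (i : ℕ) < k), svalsDesc A i ^ 2
  have hle : ∀ i, svalsDesc A i ^ 2 ≤ S := fun i =>
    calc svalsDesc A i ^ 2 ≤ svalsDesc A ⟨0, i.pos⟩ ^ 2 :=
          pow_le_pow_left₀ (svalsDesc_nonneg A i)
            (svalsDesc_antitone A (show ⟨0, i.pos⟩ ≤ i from Nat.zero_le _)) 2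
      _ ≤ S := Finset.single_le_sum (fun j _ => sq_nonneg (svalsDesc A j))
          (by simp only [Finset.mem_filter, Finset.mem_univ, true_and]; omega)
  calc ∑ i, svalsDesc A i ^ 2 ≤ ∑ _i : Fin n, S := Finset.sum_le_sum fun i _ => hle i
    _ = n * S := by simp

theorem bddAbove_kyFan2Dual_set (hk : 1 ≤ k) (A : Matrix (Fin m) (Fin n) ℝ) :
    BddAbove {c : ℝ | ∃ B : Matrix (Fin m) (Fin n) ℝ, kyFan2 k B ≤ 1 ∧ c = frobInner A B} := by
  refine ⟨frobNorm A * √n, ?_⟩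
  rintro c ⟨B, hB, rfl⟩
  have hBF : frobNorm B ≤ √n :=
    (frobNorm_le_sqrt_mul_kyFan2 hk B).trans (mul_le_of_le_one_right (Real.sqrt_nonneg _) hB)
  exact (frobInner_le_frobNorm_mul A B).trans
    (mul_le_mul_of_nonneg_left hBF (Real.sqrt_nonneg _))

theorem frobInner_le_kyFan2Dual (hk : 1 ≤ k) (A : Matrix (Fin m) (Fin n) ℝ)
    {B : Matrix (Fin m) (Fin n) ℝ} (hB : kyFan2 k B ≤ 1) : frobInner A B ≤ kyFan2Dual k A :=
  le_csSup (bddAbove_kyFan2Dual_set hk A) ⟨B, hB, rfl⟩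

theorem kyFan2Dual_pos (hk : 1 ≤ k) {A : Matrix (Fin m) (Fin n) ℝ} (hA : A ≠ 0) :
    0 < kyFan2Dual k A := by
  have hF := frobNorm_pos hA
  have hunit : kyFan2 k ((frobNorm A)⁻¹ • A) ≤ 1 := by
    refine (kyFan2_le_frobNorm k _).trans_eq ?_
    rw [frobNorm_smul, abs_of_pos (inv_pos.2 hF), inv_mul_cancel₀ hF.ne']
  calc 0 < frobNorm A := hF
    _ = frobInner A ((frobNorm A)⁻¹ • A) := by
        rw [← frobInnerₗ_apply, map_smul, frobInnerₗ_apply, frobInner_self, smul_eq_mul, sq,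
          inv_mul_cancel_left₀ hF.ne']
    _ ≤ kyFan2Dual k A := frobInner_le_kyFan2Dual hk A hunit

theorem kyFan2Dual_smul (k : ℕ) {c : ℝ} (hc : 0 ≤ c) (A : Matrix (Fin m) (Fin n) ℝ) :
    kyFan2Dual k (c • A) = c * kyFan2Dual k A := by
  rw [kyFan2Dual, kyFan2Dual, ← smul_eq_mul, ← Real.sSup_smul_of_nonneg hc]
  congr 1
  ext x
  simp only [Set.mem_ofPred_eq, Set.mem_smul_set, frobInner_smul_left, smul_eq_mul]
  constructor
  · rintro ⟨B, hB, rfl⟩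
    exact ⟨_, ⟨B, hB, rfl⟩, rfl⟩
  · rintro ⟨_, ⟨B, hB, rfl⟩, rfl⟩
    exact ⟨B, hB, rfl⟩

end KyFan

theorem critical_point_iff_general {m n p k : ℕ} (hk1 : 1 ≤ k)
    (𝒜 : Matrix (Fin m) (Fin n) ℝ →ₗ[ℝ] EuclideanSpace ℝ (Fin p))
    (b : EuclideanSpace ℝ (Fin p)) (hb : b ≠ 0)
    (X : Matrix (Fin m) (Fin n) ℝ) (hX : X ≠ 0) (hAX : 𝒜 X = b) :
    ((∀ (Z : Matrix (Fin m) (Fin n) ℝ) (z : ℝ),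
        kyFan2Dual k Z ≤ 1 → 𝒜 Z = z • b → 0 < z →
        frobInner ((kyFan2Dual k X)⁻¹ • X) Z ≤
          frobInner ((kyFan2Dual k X)⁻¹ • X) ((kyFan2Dual k X)⁻¹ • X)) ↔
      (∀ Y : Matrix (Fin m) (Fin n) ℝ, 𝒜 Y = 0 →
        kyFan2Dual k X ≤
          kyFan2Dual k (X + Y) - (kyFan2Dual k X / frobNorm X ^ 2) * frobInner X Y)) := by
  subst hAX
  set d := kyFan2Dual k X
  have hd : 0 < d := kyFan2Dual_pos hk1 hX
  have hF2 : 0 < frobNorm X ^ 2 := pow_pos (frobNorm_pos hX) 2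
  set ℓ := (d / frobNorm X ^ 2) • frobInnerₗ X
  have hℓX : ℓ X = d := by
    simp only [ℓ, LinearMap.smul_apply, frobInnerₗ_apply, frobInner_self, smul_eq_mul,
      div_mul_cancel₀ _ hF2.ne']
  have hnormalize : ∀ Z, frobInner (d⁻¹ • X) Z ≤ frobInner (d⁻¹ • X) (d⁻¹ • X) ↔ ℓ Z ≤ 1 := by
    intro Z
    rw [frobInner_smul_left, frobInner_smul_left, ← frobInnerₗ_apply X (d⁻¹ • X), map_smul,
      frobInnerₗ_apply, frobInner_self, smul_eq_mul, mul_le_mul_iff_right₀ (inv_pos.2 hd),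
      inv_mul_eq_div, le_div_iff₀' hd, LinearMap.smul_apply, frobInnerₗ_apply, smul_eq_mul,
      div_mul_eq_mul_div, div_le_one hF2]
  refine Iff.trans ?_ ((forall_cone_le_one_iff_forall_fiber_le 𝒜 ℓ
    (fun c hc => kyFan2Dual_smul k hc.le) (fun _ => kyFan2Dual_pos hk1) hb).trans
    (forall_ker_le_sub_iff_forall_fiber_le 𝒜 ℓ hℓX).symm)
  exact forall_congr' fun Z => forall_congr' fun z =>
    imp_congr_right fun _ => imp_congr_right fun _ => imp_congr_right fun _ => hnormalize Z

/-- `(X/‖X‖_{k,2}^⋆, 1/‖X‖_{k,2}^⋆)` maximizes `⟨X/‖X‖_{k,2}^⋆, Z⟩`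
over `{(Z,z) : ‖Z‖_{k,2}^⋆ ≤ 1, 𝒜 Z = z b, z > 0}` iff `Y = 0` minimizes
`‖X+Y‖_{k,2}^⋆ − α(X)⟨X,Y⟩` over `{Y : 𝒜 Y = 0}`, where `α(X) = ‖X‖_{k,2}^⋆/‖X‖_F²`. -/
theorem critical_point_iff {m n p k : ℕ} (hk1 : 1 ≤ k) (hk : k ≤ min m n)
    (𝒜 : Matrix (Fin m) (Fin n) ℝ →ₗ[ℝ] EuclideanSpace ℝ (Fin p))
    (b : EuclideanSpace ℝ (Fin p)) (hb : b ≠ 0)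
    (X : Matrix (Fin m) (Fin n) ℝ) (hX : X ≠ 0) (hAX : 𝒜 X = b) :
    ((∀ (Z : Matrix (Fin m) (Fin n) ℝ) (z : ℝ),
        kyFan2Dual k Z ≤ 1 → 𝒜 Z = z • b → 0 < z →
        frobInner ((kyFan2Dual k X)⁻¹ • X) Z ≤
          frobInner ((kyFan2Dual k X)⁻¹ • X) ((kyFan2Dual k X)⁻¹ • X)) ↔
      (∀ Y : Matrix (Fin m) (Fin n) ℝ, 𝒜 Y = 0 →
        kyFan2Dual k X ≤
          kyFan2Dual k (X + Y) - (kyFan2Dual k X / frobNorm X ^ 2) * frobInner X Y)) :=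
  critical_point_iff_general hk1 𝒜 b hb X hX hAX
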